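/- Suppose (X_j)_{j≥1} and Y are square-integrable, the X_j admit the SOE representation X_j = M + R_j (R_j mean-zero, pairwise uncorrelated, uncorrelated with M), and Y is co-exchangeable with the X_j in the sense that Cov(Y, X_j) = c is the same for all j. Then Cov(Y, R_j) = Cov(Y, X_j) - Cov(Y, M) is the same for all j, and if additionally Cov(Y, R_j) = 0 for all j, then Cov(Y, D_n) w = Cov(Y, M) (1^T w) for any vector of weights w, where D_n = (X_1,...,X_n) and 1 is the all-ones vector; in particular Cov(Y, E_{D_n}[M]) = Cov(Y, M) · (sum of the Bayes linear weights). -/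

import Mathlib

open MeasureTheory Filter

noncomputable def mean {Ω : Type*} [MeasurableSpace Ω] (μ : Measure Ω) (X : Ω → ℝ) : ℝ :=
  ∫ ω, X ω ∂μ

noncomputable def cov {Ω : Type*} [MeasurableSpace Ω] (μ : Measure Ω) (X Y : Ω → ℝ) : ℝ :=
  ∫ ω, (X ω - mean μ X) * (Y ω - mean μ Y) ∂μ

noncomputable def var {Ω : Type*} [MeasurableSpace Ω] (μ : Measure Ω) (X : Ω → ℝ) : ℝ :=
  cov μ X X

noncomputable def covMat {Ω : Type*} [MeasurableSpace Ω] (μ : Measure Ω) {m : ℕ}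
    (G : Fin m → Ω → ℝ) : Matrix (Fin m) (Fin m) ℝ :=
  Matrix.of fun i j => cov μ (G i) (G j)

/-- Bayes linear rule: `E[X] + Cov(X,G) Var(G)⁻¹ (G - E[G])`. -/
noncomputable def blRule {Ω : Type*} [MeasurableSpace Ω] (μ : Measure Ω) {m : ℕ}
    (X : Ω → ℝ) (G : Fin m → Ω → ℝ) : Ω → ℝ :=
  fun ω => mean μ X +
    ∑ i, ∑ j, cov μ X (G i) * (covMat μ G)⁻¹ i j * (G j ω - mean μ (G j))

/-! By bilinearity of covariance, `Cov(Y, M + R_j) = Cov(Y, M) + Cov(Y, R_j)`, and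
`Cov(Y, E_D[M]) = Cov(M, D) Var(D)⁻¹ Cov(D, Y)`. When `Cov(Y, X_j)` does not depend on `j`, the
last factor is a constant vector, and symmetry of `Var(D)⁻¹` turns the quadratic form into
`Cov(Y, M)` times the sum of the Bayes linear weights `Var(D)⁻¹ Cov(D, M)`. -/

open ProbabilityTheory

section

variable {Ω : Type*} [MeasurableSpace Ω] {μ : Measure Ω}

lemma cov_eq_covariance (X Y : Ω → ℝ) : cov μ X Y = covariance X Y μ := rfl

lemma cov_comm (X Y : Ω → ℝ) : cov μ X Y = cov μ Y X := covariance_comm X Y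

lemma covMat_isSymm {m : ℕ} (G : Fin m → Ω → ℝ) : (covMat μ G).IsSymm :=
  Matrix.IsSymm.ext fun i j => cov_comm (G j) (G i)

variable [IsProbabilityMeasure μ]

lemma cov_blRule {m : ℕ} {Y : Ω → ℝ} (X : Ω → ℝ) {G : Fin m → Ω → ℝ} (hY : MemLp Y 2 μ)
    (hG : ∀ i, MemLp (G i) 2 μ) :
    cov μ Y (blRule μ X G) =
      ∑ i, ∑ j, cov μ X (G i) * (covMat μ G)⁻¹ i j * cov μ Y (G j) := by
  have hterm : ∀ i j, MemLp (fun ω => cov μ X (G i) * (covMat μ G)⁻¹ i j *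
      (G j ω - mean μ (G j))) 2 μ := fun i j => ((hG j).sub (memLp_const _)).const_mul _
  have hrow : ∀ i, MemLp (fun ω => ∑ j, cov μ X (G i) * (covMat μ G)⁻¹ i j *
      (G j ω - mean μ (G j))) 2 μ := fun i => memLp_finsetSum _ fun j _ => hterm i j
  unfold blRule
  rw [cov_eq_covariance,
    covariance_const_add_right ((memLp_finsetSum _ fun i _ => hrow i).integrable one_le_two),
    covariance_fun_sum_right hrow hY]
  refine Finset.sum_congr rfl fun i _ => ?_
  rw [covariance_fun_sum_right (hterm i) hY]
  refine Finset.sum_congr rfl fun j _ => ?_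
  rw [covariance_const_mul_right, covariance_sub_const_right ((hG j).integrable one_le_two)]
  rfl

lemma cov_blRule_of_cov_eq {m : ℕ} {Y : Ω → ℝ} (X : Ω → ℝ) {G : Fin m → Ω → ℝ} {a : ℝ}
    (hY : MemLp Y 2 μ) (hG : ∀ i, MemLp (G i) 2 μ) (hYG : ∀ i, cov μ Y (G i) = a) :
    cov μ Y (blRule μ X G) = a * ∑ i, ∑ j, (covMat μ G)⁻¹ i j * cov μ (G j) X := by
  rw [cov_blRule X hY hG, Finset.sum_comm, Finset.mul_sum]
  refine Finset.sum_congr rfl fun i _ => ?_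
  rw [Finset.mul_sum]
  refine Finset.sum_congr rfl fun j _ => ?_
  rw [hYG, (covMat_isSymm G).inv.apply, cov_comm X]
  ring

end

theorem stmt17_general {Ω : Type*} [MeasurableSpace Ω] (μ : Measure Ω) [IsProbabilityMeasure μ]
    (M Y : Ω → ℝ) (R : ℕ → Ω → ℝ) (c : ℝ) {n : ℕ}
    (hM : MemLp M 2 μ) (hY : MemLp Y 2 μ) (hR : ∀ j, MemLp (R j) 2 μ)
    (hco : ∀ j, cov μ Y (fun ω => M ω + R j ω) = c) :
    (∀ j k, cov μ Y (R j) = cov μ Y (R k)) ∧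
    (∀ j, cov μ Y (R j) = cov μ Y (fun ω => M ω + R j ω) - cov μ Y M) ∧
    ((∀ j, cov μ Y (R j) = 0) → ∀ w : Fin n → ℝ,
      ∑ i, cov μ Y (fun ω => M ω + R i.val ω) * w i = cov μ Y M * ∑ i, w i) ∧
    ((∀ j, cov μ Y (R j) = 0) →
      cov μ Y (blRule μ M (fun i : Fin n => fun ω => M ω + R i.val ω)) =
        cov μ Y M * ∑ i : Fin n, ∑ j : Fin n,
          (covMat μ (fun i : Fin n => fun ω => M ω + R i.val ω))⁻¹ i j *
            cov μ (fun ω => M ω + R j.val ω) M) := by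
  have hsplit (j : ℕ) : cov μ Y (fun ω => M ω + R j ω) = cov μ Y M + cov μ Y (R j) :=
    covariance_add_right hY hM (hR j)
  have hdiff (j : ℕ) : cov μ Y (R j) = cov μ Y (fun ω => M ω + R j ω) - cov μ Y M := by
    rw [hsplit]; ring
  have hmember (hz : ∀ j, cov μ Y (R j) = 0) (j : ℕ) :
      cov μ Y (fun ω => M ω + R j ω) = cov μ Y M := by
    rw [hsplit, hz, add_zero]
  refine ⟨fun j k => by rw [hdiff j, hdiff k, hco j, hco k], hdiff, fun hz w => ?_, fun hz => ?_⟩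
  · simp only [hmember hz, Finset.mul_sum]
  · exact cov_blRule_of_cov_eq M hY (fun i => hM.add (hR i)) fun i => hmember hz i

theorem stmt17 {Ω : Type*} [MeasurableSpace Ω] (μ : Measure Ω) [IsProbabilityMeasure μ]
    (M Y : Ω → ℝ) (R : ℕ → Ω → ℝ) (c : ℝ) {n : ℕ}
    (hM : MemLp M 2 μ) (hY : MemLp Y 2 μ) (hR : ∀ j, MemLp (R j) 2 μ)
    (hmean : ∀ j, mean μ (R j) = 0)
    (hRR : ∀ j k, j ≠ k → cov μ (R j) (R k) = 0)
    (hMR : ∀ j, cov μ M (R j) = 0)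
    (hco : ∀ j, cov μ Y (fun ω => M ω + R j ω) = c) :
    (∀ j k, cov μ Y (R j) = cov μ Y (R k)) ∧
    (∀ j, cov μ Y (R j) = cov μ Y (fun ω => M ω + R j ω) - cov μ Y M) ∧
    ((∀ j, cov μ Y (R j) = 0) → ∀ w : Fin n → ℝ,
      ∑ i, cov μ Y (fun ω => M ω + R i.val ω) * w i = cov μ Y M * ∑ i, w i) ∧
    ((∀ j, cov μ Y (R j) = 0) →
      cov μ Y (blRule μ M (fun i : Fin n => fun ω => M ω + R i.val ω)) =
        cov μ Y M * ∑ i : Fin n, ∑ j : Fin n,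
          (covMat μ (fun i : Fin n => fun ω => M ω + R i.val ω))⁻¹ i j *
            cov μ (fun ω => M ω + R j.val ω) M) :=
  stmt17_general μ M Y R c hM hY hR hco
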